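/- arXiv:1601.00305 — 2 statements merged into one kernel-verified Lean document; each statement's English description precedes it below -/
import Mathlib

section
/- Suppose (a|b) is a Frobenius seaweed datum for sp_{2n} (i.e., T_n(a|b)=0) with Σb_j = n and Σa_i = n−k, so the meander graph Γ^C_n(a|b) has exactly k central arcs (all above the horizontal line). Then Γ^C_n(a|b) has exactly k connected components, each a σ-stable segment containing exactly one central arc, and the total number of arcs of Γ^C_n(a|b) is 2n−k. -/
/-!
Each vertex of `Γ^C_n(a|b)` is the end of at most one upper and one lower arc, so every component
is a path or a cycle. If `T_n(a|b) = 0` there are no cycles and every component is a `σ`-stable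
path, hence a tree. Since `σ` has no fixed vertex, such a tree has an even number of vertices,
hence an odd number of edges, so the involution induced by `σ` on its edges fixes one, `{x, σ x}`.
An edge of this form crosses the mirror, and the crossing edges are exactly the `k` central arcs.
A tree has at most one `σ`-fixed edge: deleting it splits the tree into two halves that `σ`
exchanges, and a second fixed edge would join them. So the components correspond to the central
arcs, and a forest on `2n` vertices with `k` components has `2n - k` edges.
-/

/-- The arc of a block starting at offset `o` of size `m`: the `k`-th nested arc
joins vertices `o+k` and `o+(m-1-k)` (0-based), for `2k+1 < m`. -/
def inBlockArc (o m i j : ℕ) : Prop :=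
  ∃ k : ℕ, 2 * k + 1 < m ∧ i = o + k ∧ j = o + (m - 1 - k)

/-- Arcs determined by a composition, drawn block by block starting at offset `o`. -/
def arcs : List ℕ → ℕ → ℕ → ℕ → Prop
  | [], _, _, _ => False
  | m :: rest, o, i, j => inBlockArc o m i j ∨ arcs rest (o + m) i j

/-- The type-A meander graph of the pair of compositions `(a | b)` on `n` vertices
(0-based): arcs of `a` above the line, arcs of `b` below. -/
def meanderA (n : ℕ) (a b : List ℕ) : SimpleGraph (Fin n) where
  Adj i j := i ≠ j ∧ (arcs a 0 i.val j.val ∨ arcs a 0 j.val i.val ∨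
      arcs b 0 i.val j.val ∨ arcs b 0 j.val i.val)
  symm := by
    constructor
    intro i j h
    exact ⟨Ne.symm h.1, by tauto⟩
  loopless := by
    constructor
    intro i h
    exact h.1 rfl

/-- The symmetric composition `(a₁,…,a_s, 2d, a_s,…,a₁)` of `2n`, where
`d = n - Σ aᵢ` (a zero middle part is omitted). -/
def tildeComp (n : ℕ) (a : List ℕ) : List ℕ :=
  (a ++ [2 * (n - a.sum)] ++ a.reverse).filter (fun x => x != 0)

/-- The type-C meander graph `Γ^C_n(a|b)` on `2n` vertices. -/
def meanderC (n : ℕ) (a b : List ℕ) : SimpleGraph (Fin (2 * n)) :=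
  meanderA (2 * n) (tildeComp n a) (tildeComp n b)

/-- The reflection `σ` sending vertex `i` to `2n + 1 - i` (0-based: `i ↦ 2n - 1 - i`). -/
def sigmaRefl (n : ℕ) : Fin (2 * n) → Fin (2 * n) :=
  fun i => ⟨2 * n - 1 - i.val, by have := i.isLt; omega⟩

/-- A connected component is a cycle if every vertex in it has degree 2. -/
def IsCycleComp {V : Type*} (G : SimpleGraph V) (c : G.ConnectedComponent) : Prop :=
  ∀ v, G.connectedComponentMk v = c → (G.neighborSet v).ncard = 2

/-- A connected component is a segment if it is not a cycle. -/
def IsSegmentComp {V : Type*} (G : SimpleGraph V) (c : G.ConnectedComponent) : Prop :=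
  ¬ IsCycleComp G c

/-- The number of cycles of a graph. -/
noncomputable def numCycles {V : Type*} (G : SimpleGraph V) : ℕ :=
  {c : G.ConnectedComponent | IsCycleComp G c}.ncard

/-- The number of segments of a graph. -/
noncomputable def numSegments {V : Type*} (G : SimpleGraph V) : ℕ :=
  {c : G.ConnectedComponent | IsSegmentComp G c}.ncard

/-- A component of a type-C meander graph is `σ`-stable if `σ` maps it to itself. -/
def SigmaStable (n : ℕ) (G : SimpleGraph (Fin (2 * n))) (c : G.ConnectedComponent) : Prop :=
  ∀ v, G.connectedComponentMk v = c → G.connectedComponentMk (sigmaRefl n v) = c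

/-- The number of non-`σ`-stable segments of `Γ^C_n(a|b)`. -/
noncomputable def numNonStableSegments (n : ℕ) (a b : List ℕ) : ℕ :=
  {c : (meanderC n a b).ConnectedComponent |
    IsSegmentComp (meanderC n a b) c ∧ ¬ SigmaStable n (meanderC n a b) c}.ncard

/-- The topological index `T_n(a|b)` of `Γ^C_n(a|b)`:
(number of cycles) + ½·(number of non-`σ`-stable segments). -/
noncomputable def topIndex (n : ℕ) (a b : List ℕ) : ℚ :=
  (numCycles (meanderC n a b) : ℚ) + (numNonStableSegments n a b : ℚ) / 2

/-- A composition: all parts are positive. -/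
def IsComposition (a : List ℕ) : Prop := ∀ x ∈ a, 0 < x

open Function SimpleGraph

lemma Function.Involutive.two_dvd_natCard {α : Type*} [Finite α] {f : α → α}
    (hf : Involutive f) (hne : ∀ x, f x ≠ x) : 2 ∣ Nat.card α := by
  classical
  have := Fintype.ofFinite α
  have h := Equiv.Perm.two_dvd_card_support (σ := hf.toPerm f) (by ext x; simp [sq, hf x])
  rwa [show (hf.toPerm f).support = Finset.univ by ext x; simp [hne],
    Finset.card_univ, ← Nat.card_eq_fintype_card] at h

namespace SimpleGraph

variable {V : Type*} {G : SimpleGraph V}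

lemma ncard_neighborSet_eq_degree [Fintype V] [DecidableRel G.Adj] (v : V) :
    (G.neighborSet v).ncard = G.degree v := by
  rw [← card_neighborSet_eq_degree, ← Nat.card_eq_fintype_card, Nat.card_coe_set_eq]

lemma sum_ncard_neighborSet [Fintype V] :
    ∑ v, (G.neighborSet v).ncard = 2 * Nat.card G.edgeSet := by
  classical
  simp only [ncard_neighborSet_eq_degree]
  rw [sum_degrees_eq_twice_card_edges, edgeFinset_card, Nat.card_eq_fintype_card]

lemma Reachable.deleteEdges_or {u v x : V} (h : G.Reachable u x) :
    (G.deleteEdges {s(u, v)}).Reachable u x ∨ (G.deleteEdges {s(u, v)}).Reachable v x := by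
  obtain ⟨p⟩ := h.symm
  clear h
  induction p with
  | nil => exact Or.inl .rfl
  | @cons x y z hxy p ih =>
    by_cases he : s(x, y) = s(z, v)
    · rcases Sym2.eq_iff.mp he with ⟨rfl, -⟩ | ⟨rfl, -⟩
      · exact Or.inl .rfl
      · exact Or.inr .rfl
    · have hadj : (G.deleteEdges {s(z, v)}).Adj y x := by
        rw [deleteEdges_adj, Set.mem_singleton_iff, Sym2.eq_swap]
        exact ⟨hxy.symm, he⟩
      exact ih.imp (·.trans hadj.reachable) (·.trans hadj.reachable)

lemma ConnectedComponent.ncard_neighborSet_toSimpleGraph (c : G.ConnectedComponent) (x : c) :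
    (c.toSimpleGraph.neighborSet x).ncard = (G.neighborSet x).ncard := by
  refine Set.ncard_preimage_of_injective_subset_range Subtype.val_injective fun y hy => ?_
  exact ⟨⟨y, c.mem_supp_of_adj_mem_supp x.2 hy⟩, rfl⟩

lemma Connected.isTree_of_ncard_neighborSet_le_two [Finite V] (hG : G.Connected)
    (hdeg : ∀ v, (G.neighborSet v).ncard ≤ 2) (hleaf : ∃ v, (G.neighborSet v).ncard < 2) :
    G.IsTree := by
  have := Fintype.ofFinite V
  refine isTree_iff_connected_and_card.mpr
    ⟨hG, le_antisymm ?_ hG.card_vert_le_card_edgeSet_add_one⟩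
  obtain ⟨v, hv⟩ := hleaf
  have hlt : ∑ v, (G.neighborSet v).ncard < ∑ _v : V, 2 :=
    Finset.sum_lt_sum (fun v _ => hdeg v) ⟨v, Finset.mem_univ _, hv⟩
  rw [sum_ncard_neighborSet, Finset.sum_const, Finset.card_univ, ← Nat.card_eq_fintype_card,
    smul_eq_mul] at hlt
  omega

lemma natCard_edgeSet_add_natCard_connectedComponent [Finite V]
    (h : ∀ c : G.ConnectedComponent, c.toSimpleGraph.IsTree) :
    Nat.card G.edgeSet + Nat.card G.ConnectedComponent = Nat.card V := by
  classical
  have := Fintype.ofFinite V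
  have hE : 2 * Nat.card G.edgeSet =
      2 * ∑ c : G.ConnectedComponent, Nat.card c.toSimpleGraph.edgeSet := by
    rw [Finset.mul_sum, ← sum_ncard_neighborSet, ← Fintype.sum_fiberwise G.connectedComponentMk]
    refine Finset.sum_congr rfl fun c _ => ?_
    rw [← sum_ncard_neighborSet]
    exact Finset.sum_congr rfl fun x _ => (c.ncard_neighborSet_toSimpleGraph x).symm
  have hV : Nat.card V = ∑ c : G.ConnectedComponent, (Nat.card c.toSimpleGraph.edgeSet + 1) := by
    simp_rw [(isTree_iff_connected_and_card.mp (h _)).2]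
    rw [← Nat.card_sigma]
    exact (Nat.card_congr (Equiv.sigmaFiberEquiv G.connectedComponentMk)).symm
  rw [hV, Finset.sum_add_distrib, Finset.sum_const, Finset.card_univ, smul_eq_mul, mul_one,
    Nat.card_eq_fintype_card (α := G.ConnectedComponent)]
  omega

section Involution

variable {σ : V → V} (hσ : Involutive σ) (hadj : ∀ x y, G.Adj x y → G.Adj (σ x) (σ y))
include hσ hadj

lemma IsTree.exists_adj_apply_self [Finite V] (hG : G.IsTree) (hfix : ∀ x, σ x ≠ x) :
    ∃ x, G.Adj x (σ x) := by
  by_contra! hno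
  let f : G →g G := ⟨σ, hadj _ _⟩
  have hf : Involutive f.mapEdgeSet := by
    rintro ⟨e, he⟩
    apply Subtype.ext
    simp only [Hom.mapEdgeSet, f, RelHom.coeFn_mk, Sym2.map_map, hσ.comp_self, Sym2.map_id', id]
  have hfe : ∀ e, f.mapEdgeSet e ≠ e := by
    rintro ⟨e, he⟩ h
    induction e using Sym2.ind with
    | _ x y =>
      simp only [Hom.mapEdgeSet, Subtype.mk.injEq, Sym2.map_mk, Sym2.eq_iff, f,
        RelHom.coeFn_mk] at h
      rcases h with ⟨h, -⟩ | ⟨h, -⟩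
      · exact hfix x h
      · exact hno x (h ▸ he)
  have hV := hσ.two_dvd_natCard hfix
  have hE := hf.two_dvd_natCard hfe
  have := (isTree_iff_connected_and_card.mp hG).2
  omega

lemma IsAcyclic.eq_or_eq_of_adj_apply_self (hG : G.IsAcyclic) {v w : V} (hv : G.Adj v (σ v))
    (hw : G.Adj w (σ w)) (hvw : G.Reachable v w) : w = v ∨ w = σ v := by
  set G' := G.deleteEdges {s(v, σ v)}
  have hbridge : ¬ G'.Reachable v (σ v) :=
    isBridge_iff.mp (isAcyclic_iff_forall_adj_isBridge.mp hG hv)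
  have hσ' : ∀ {x y}, G'.Reachable x y → G'.Reachable (σ x) (σ y) := by
    refine fun h => h.map (⟨σ, fun {x y} hxy => ?_⟩ : G' →g G')
    simp only [G', deleteEdges_adj, Set.mem_singleton_iff] at hxy ⊢
    refine ⟨hadj _ _ hxy.1, fun he => hxy.2 ?_⟩
    simpa [hσ _, Sym2.eq_swap] using congrArg (Sym2.map σ) he
  by_contra! hne
  have hw' : G'.Adj w (σ w) := by
    simp only [G', deleteEdges_adj, Set.mem_singleton_iff, hw, true_and]
    rw [Sym2.eq_iff]
    tauto
  rcases hvw.deleteEdges_or (v := σ v) with h | h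
  · exact hbridge ((h.trans hw'.reachable).trans (hσ' h).symm)
  · have h' := hσ' h
    rw [hσ v] at h'
    exact hbridge ((h'.trans hw'.reachable.symm).trans h.symm)

namespace ConnectedComponent

variable {c : G.ConnectedComponent} (hc : ∀ v ∈ c, σ v ∈ c)
include hc

lemma exists_adj_apply_self [Finite V] (hT : c.toSimpleGraph.IsTree) (hfix : ∀ x, σ x ≠ x) :
    ∃ v ∈ c, G.Adj v (σ v) := by
  obtain ⟨x, hx⟩ := hT.exists_adj_apply_self (σ := fun x : c => ⟨σ x, hc x x.2⟩)
    (fun x => Subtype.ext (hσ x)) (fun x y h => hadj x y h)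
    (fun x h => hfix x (congrArg Subtype.val h))
  exact ⟨x, x.2, hx⟩

lemma eq_or_eq_of_adj_apply_self (hT : c.toSimpleGraph.IsAcyclic) {v w : V} (hv : v ∈ c)
    (hw : w ∈ c) (hvσ : G.Adj v (σ v)) (hwσ : G.Adj w (σ w)) : w = v ∨ w = σ v := by
  have := hT.eq_or_eq_of_adj_apply_self (σ := fun x : c => ⟨σ x, hc x x.2⟩)
    (fun x => Subtype.ext (hσ x)) (fun x y h => hadj x y h) (v := ⟨v, hv⟩) (w := ⟨w, hw⟩)
    hvσ hwσ (c.connected_toSimpleGraph _ _)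
  simpa [Subtype.ext_iff] using this

end ConnectedComponent

end Involution

lemma ConnectedComponent.isTree_toSimpleGraph [Finite V]
    (hdeg : ∀ v, (G.neighborSet v).ncard ≤ 2) {c : G.ConnectedComponent}
    (hc : IsSegmentComp G c) : c.toSimpleGraph.IsTree := by
  obtain ⟨v, hv, hv2⟩ :
      ∃ v, G.connectedComponentMk v = c ∧ (G.neighborSet v).ncard ≠ 2 := by
    simpa [IsSegmentComp, IsCycleComp] using hc
  refine c.connected_toSimpleGraph.isTree_of_ncard_neighborSet_le_two
    (fun x => (c.ncard_neighborSet_toSimpleGraph x).trans_le (hdeg x))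
    ⟨⟨v, hv⟩, (c.ncard_neighborSet_toSimpleGraph _).trans_lt ((hdeg v).lt_of_ne hv2)⟩

lemma natCard_connectedComponent_eq_ncard {s : Set V}
    (h : ∀ c : G.ConnectedComponent, ∃! v, v ∈ c ∧ v ∈ s) :
    Nat.card G.ConnectedComponent = s.ncard := by
  rw [← Nat.card_coe_set_eq]
  refine (Nat.card_eq_of_bijective (fun v : s => G.connectedComponentMk v)
    ⟨?_, fun c => ?_⟩).symm
  · intro v w hvw
    exact Subtype.ext ((h _).unique ⟨rfl, v.2⟩ ⟨hvw.symm, w.2⟩)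
  · obtain ⟨v, ⟨hvc, hvs⟩, -⟩ := h c
    exact ⟨⟨v, hvs⟩, hvc⟩

end SimpleGraph

def linked (c : List ℕ) (o i j : ℕ) : Prop := arcs c o i j ∨ arcs c o j i

/-- The mirror image of `i` in the block of `c` (drawn from offset `o`) containing it. -/
def blockMirror : List ℕ → ℕ → ℕ → ℕ
  | [], _, i => i
  | m :: rest, o, i => if i < o + m then 2 * o + m - 1 - i else blockMirror rest (o + m) i

lemma arcs_bounds {c : List ℕ} {o i j : ℕ} (h : arcs c o i j) :
    o ≤ i ∧ i < j ∧ j < o + c.sum := by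
  induction c generalizing o with
  | nil => exact h.elim
  | cons m rest ih =>
    rcases h with ⟨t, ht, rfl, rfl⟩ | h
    · simp only [List.sum_cons]; omega
    · have := ih h; simp only [List.sum_cons]; omega

lemma arcs_append {c₁ c₂ : List ℕ} {o i j : ℕ} :
    arcs (c₁ ++ c₂) o i j ↔ arcs c₁ o i j ∨ arcs c₂ (o + c₁.sum) i j := by
  induction c₁ generalizing o with
  | nil => simp [arcs]
  | cons m rest ih =>
    simp only [List.cons_append, arcs, ih, List.sum_cons, or_assoc, Nat.add_assoc]

lemma arcs_filter_ne_zero {c : List ℕ} {o i j : ℕ} :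
    arcs (c.filter (· != 0)) o i j ↔ arcs c o i j := by
  induction c generalizing o with
  | nil => rfl
  | cons m rest ih =>
    rcases Nat.eq_zero_or_pos m with rfl | hm
    · simp [arcs, inBlockArc, ih]
    · simp [hm.ne', arcs, ih]

lemma arcs_reverse {c : List ℕ} {o i j S : ℕ} (h : arcs c o i j) (hS : o + c.sum ≤ S) :
    arcs c.reverse (S - o - c.sum) (S - 1 - j) (S - 1 - i) := by
  induction c generalizing o with
  | nil => exact h.elim
  | cons m rest ih =>
    simp only [List.sum_cons] at hS
    rw [List.reverse_cons, arcs_append, List.sum_reverse, List.sum_cons]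
    rcases h with ⟨t, ht, rfl, rfl⟩ | h
    · exact Or.inr (Or.inl ⟨t, ht, by omega, by omega⟩)
    · have := ih h (by omega)
      rw [show S - (o + m) - rest.sum = S - o - (m + rest.sum) by omega] at this
      exact Or.inl this

lemma linked_eq_blockMirror {c : List ℕ} {o i j : ℕ} (h : linked c o i j) :
    j = blockMirror c o i := by
  induction c generalizing o with
  | nil => exact h.elim False.elim False.elim
  | cons m rest ih =>
    rcases h with (⟨t, ht, rfl, rfl⟩ | h) | (⟨t, ht, rfl, rfl⟩ | h)
    · rw [blockMirror, if_pos (by omega)]; omega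
    · have := arcs_bounds h
      rw [blockMirror, if_neg (by omega)]; exact ih (Or.inl h)
    · rw [blockMirror, if_pos (by omega)]; omega
    · have := arcs_bounds h
      rw [blockMirror, if_neg (by omega)]; exact ih (Or.inr h)

/-- `tildeComp n a` before its zero parts are dropped; a zero part carries no arc and does not
shift the following blocks, so both draw the same arcs. -/
def symmetricComp (n : ℕ) (a : List ℕ) : List ℕ := a ++ [2 * (n - a.sum)] ++ a.reverse

lemma arcs_tildeComp {n : ℕ} {a : List ℕ} {o i j : ℕ} :
    arcs (tildeComp n a) o i j ↔ arcs (symmetricComp n a) o i j :=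
  arcs_filter_ne_zero

lemma symmetricComp_reverse (n : ℕ) (a : List ℕ) :
    (symmetricComp n a).reverse = symmetricComp n a := by
  simp [symmetricComp]

lemma sum_symmetricComp {n : ℕ} {a : List ℕ} (h : a.sum ≤ n) :
    (symmetricComp n a).sum = 2 * n := by
  simp only [symmetricComp, List.sum_append, List.sum_reverse, List.sum_cons, List.sum_nil]
  omega

lemma linked_reflect {c : List ℕ} (hc : c.reverse = c) {i j : ℕ} (h : linked c 0 i j) :
    linked c 0 (c.sum - 1 - i) (c.sum - 1 - j) := by
  have reflect {i j : ℕ} (h : arcs c 0 i j) : arcs c 0 (c.sum - 1 - j) (c.sum - 1 - i) := by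
    simpa [hc] using arcs_reverse h (S := c.sum) (Nat.zero_add _).le
  exact h.symm.imp reflect reflect

section Meander

variable {n k : ℕ} {a b : List ℕ}

lemma meanderC_adj {i j : Fin (2 * n)} :
    (meanderC n a b).Adj i j ↔
      i ≠ j ∧ (linked (symmetricComp n a) 0 i j ∨ linked (symmetricComp n b) 0 i j) := by
  simp only [meanderC, meanderA, linked, arcs_tildeComp, or_assoc]

lemma ncard_neighborSet_meanderA_le_two (N : ℕ) (a b : List ℕ) (v : Fin N) :
    ((meanderA N a b).neighborSet v).ncard ≤ 2 := by
  have hsub : Fin.val '' (meanderA N a b).neighborSet v ⊆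
      {blockMirror a 0 v, blockMirror b 0 v} := by
    rintro _ ⟨w, ⟨-, h⟩, rfl⟩
    rcases h with h | h | h | h
    · exact Or.inl (linked_eq_blockMirror (Or.inl h))
    · exact Or.inl (linked_eq_blockMirror (Or.inr h))
    · exact Or.inr (linked_eq_blockMirror (Or.inl h))
    · exact Or.inr (linked_eq_blockMirror (Or.inr h))
  calc ((meanderA N a b).neighborSet v).ncard
      = (Fin.val '' (meanderA N a b).neighborSet v).ncard :=
        (Set.ncard_image_of_injective _ Fin.val_injective).symm
    _ ≤ ({blockMirror a 0 v, blockMirror b 0 v} : Set ℕ).ncard := Set.ncard_le_ncard hsub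
    _ ≤ 2 := (Set.ncard_insert_le _ _).trans (by simp)

lemma sigmaRefl_involutive : Function.Involutive (sigmaRefl n) := fun i => by
  ext; simp only [sigmaRefl]; omega

lemma sigmaRefl_ne_self (i : Fin (2 * n)) : sigmaRefl n i ≠ i := fun h => by
  have := congrArg Fin.val h; simp only [sigmaRefl] at this; omega

lemma meanderC_adj_sigmaRefl (ha : a.sum ≤ n) (hb : b.sum ≤ n) {i j : Fin (2 * n)}
    (h : (meanderC n a b).Adj i j) : (meanderC n a b).Adj (sigmaRefl n i) (sigmaRefl n j) := by
  rw [meanderC_adj] at h ⊢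
  refine ⟨sigmaRefl_involutive.injective.ne h.1, h.2.imp ?_ ?_⟩ <;> intro hl
  · simpa [sum_symmetricComp ha, sigmaRefl] using linked_reflect (symmetricComp_reverse n a) hl
  · simpa [sum_symmetricComp hb, sigmaRefl] using linked_reflect (symmetricComp_reverse n b) hl

lemma meanderC_adj_iff_of_lt_of_le (hkn : k ≤ n) (hsa : a.sum = n - k) (hsb : b.sum = n)
    {i j : Fin (2 * n)} (hi : i.val < n) (hj : n ≤ j.val) :
    (meanderC n a b).Adj i j ↔ n - k ≤ i.val ∧ j = sigmaRefl n i := by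
  rw [meanderC_adj]
  constructor
  · rintro ⟨-, (h | h) | (h | h)⟩
    · rw [symmetricComp, arcs_append, arcs_append] at h
      rcases h with (h | (⟨t, ht, hit, hjt⟩ | h)) | h
      · have := arcs_bounds h; omega
      · exact ⟨by omega, Fin.ext (by simp only [sigmaRefl]; omega)⟩
      · exact h.elim
      · have := arcs_bounds h
        simp only [List.sum_append, List.sum_cons, List.sum_nil, hsa] at this; omega
    · have := arcs_bounds h; omega
    · rw [symmetricComp, arcs_append] at h
      rcases h with h | h <;> have := arcs_bounds h <;>
        simp only [List.sum_append, List.sum_cons, List.sum_nil, hsb] at this <;> omega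
    · have := arcs_bounds h; omega
  · rintro ⟨hik, rfl⟩
    refine ⟨(sigmaRefl_ne_self i).symm, Or.inl (Or.inl ?_)⟩
    simp only [symmetricComp, arcs_append, hsa]
    refine Or.inl (Or.inr (Or.inl ⟨i.val - (n - k), by omega, by omega, ?_⟩))
    simp only [sigmaRefl]
    omega

lemma isSegmentComp_and_sigmaStable_of_topIndex_eq_zero (hT : topIndex n a b = 0)
    (c : (meanderC n a b).ConnectedComponent) :
    IsSegmentComp (meanderC n a b) c ∧ SigmaStable n (meanderC n a b) c := by
  have h1 := (numCycles (meanderC n a b)).cast_nonneg (α := ℚ)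
  have h2 := (numNonStableSegments n a b).cast_nonneg (α := ℚ)
  rw [topIndex] at hT
  have hcyc : numCycles (meanderC n a b) = 0 := (Nat.cast_eq_zero (R := ℚ)).mp (by linarith)
  have hns : numNonStableSegments n a b = 0 := (Nat.cast_eq_zero (R := ℚ)).mp (by linarith)
  rw [numCycles, Set.ncard_eq_zero, Set.eq_empty_iff_forall_notMem] at hcyc
  rw [numNonStableSegments, Set.ncard_eq_zero, Set.eq_empty_iff_forall_notMem] at hns
  exact ⟨hcyc c, by_contra fun hunstable => hns c ⟨hcyc c, hunstable⟩⟩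

lemma isTree_toSimpleGraph_of_topIndex_eq_zero (hT : topIndex n a b = 0)
    (c : (meanderC n a b).ConnectedComponent) : c.toSimpleGraph.IsTree :=
  ConnectedComponent.isTree_toSimpleGraph (ncard_neighborSet_meanderA_le_two _ _ _)
    (isSegmentComp_and_sigmaStable_of_topIndex_eq_zero hT c).1

/-- `Set.Ico (n - k) n` holds the left ends of the central arcs. -/
lemma existsUnique_central_mem (hkn : k ≤ n) (hsa : a.sum = n - k) (hsb : b.sum = n)
    (hT : topIndex n a b = 0) (c : (meanderC n a b).ConnectedComponent) :
    ∃! x : Fin (2 * n), x ∈ c ∧ x.val ∈ Set.Ico (n - k) n := by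
  have hadj (x y : Fin (2 * n)) := meanderC_adj_sigmaRefl (a := a) (b := b) (i := x) (j := y)
    (by omega) (by omega)
  have hcentral {x : Fin (2 * n)} (hx : x.val < n) :
      (meanderC n a b).Adj x (sigmaRefl n x) ↔ n - k ≤ x.val := by
    rw [meanderC_adj_iff_of_lt_of_le hkn hsa hsb hx (by simp only [sigmaRefl]; omega)]
    simp
  have hstab := (isSegmentComp_and_sigmaStable_of_topIndex_eq_zero hT c).2
  have htree := isTree_toSimpleGraph_of_topIndex_eq_zero hT c
  obtain ⟨x, hxc, hx⟩ := ConnectedComponent.exists_adj_apply_self sigmaRefl_involutive hadj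
    hstab htree sigmaRefl_ne_self
  obtain ⟨y, hyc, hy, hyn⟩ :
      ∃ y ∈ c, (meanderC n a b).Adj y (sigmaRefl n y) ∧ y.val < n := by
    by_cases hxn : x.val < n
    · exact ⟨x, hxc, hx, hxn⟩
    · refine ⟨sigmaRefl n x, hstab x hxc, ?_, by simp only [sigmaRefl]; omega⟩
      rw [sigmaRefl_involutive x]
      exact hx.symm
  refine ⟨y, ⟨hyc, (hcentral hyn).1 hy, hyn⟩, fun z ⟨hzc, hzk, hzn⟩ => ?_⟩
  refine (ConnectedComponent.eq_or_eq_of_adj_apply_self sigmaRefl_involutive hadj hstab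
    htree.isAcyclic hyc hzc hy ((hcentral hzn).2 hzk)).resolve_right fun h => ?_
  rw [h] at hzn
  simp only [sigmaRefl] at hzn
  omega

end Meander

theorem frobenius_k_components_general (n k : ℕ) (a b : List ℕ)
    (hkn : k ≤ n)
    (hsa : a.sum = n - k) (hsb : b.sum = n)
    (hT : topIndex n a b = 0) :
    Nat.card (meanderC n a b).ConnectedComponent = k ∧
    (∀ c : (meanderC n a b).ConnectedComponent,
      IsSegmentComp (meanderC n a b) c ∧ SigmaStable n (meanderC n a b) c ∧
      ∃! p : Fin (2 * n) × Fin (2 * n),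
        (meanderC n a b).Adj p.1 p.2 ∧ p.1.val < n ∧ n ≤ p.2.val ∧
        (meanderC n a b).connectedComponentMk p.1 = c) ∧
    (meanderC n a b).edgeSet.ncard = 2 * n - k := by
  have hcentral := existsUnique_central_mem hkn hsa hsb hT
  have hcard : Nat.card (meanderC n a b).ConnectedComponent = k := by
    rw [natCard_connectedComponent_eq_ncard (s := Fin.val ⁻¹' Set.Ico (n - k) n) hcentral,
      Set.ncard_preimage_of_injective_subset_range Fin.val_injective, Set.ncard_Ico_nat]
    · omega
    · exact fun i hi => ⟨⟨i, by simp at hi; omega⟩, rfl⟩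
  have hsegStab := isSegmentComp_and_sigmaStable_of_topIndex_eq_zero hT
  refine ⟨hcard, fun c => ⟨(hsegStab c).1, (hsegStab c).2, ?_⟩, ?_⟩
  · obtain ⟨x, ⟨hxc, hxk, hxn⟩, hxu⟩ := hcentral c
    have hσx : n ≤ (sigmaRefl n x).val := by simp only [sigmaRefl]; omega
    have hadj := (meanderC_adj_iff_of_lt_of_le hkn hsa hsb hxn hσx).2 ⟨hxk, rfl⟩
    refine ⟨(x, sigmaRefl n x), ⟨hadj, hxn, hσx, hxc⟩, ?_⟩
    rintro ⟨y, z⟩ ⟨hyz, hyn, hzn, hyc⟩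
    dsimp only at hyz hyn hzn hyc
    obtain ⟨hyk, rfl⟩ := (meanderC_adj_iff_of_lt_of_le hkn hsa hsb hyn hzn).1 hyz
    rw [hxu y ⟨hyc, hyk, hyn⟩]
  · have := natCard_edgeSet_add_natCard_connectedComponent
      (isTree_toSimpleGraph_of_topIndex_eq_zero hT)
    rw [hcard, Nat.card_coe_set_eq, Nat.card_fin] at this
    omega

/-- A Frobenius datum with `k` central arcs: the meander graph has exactly `k`
connected components, each a `σ`-stable segment containing exactly one central
arc, and the total number of arcs is `2n - k`. -/
theorem frobenius_k_components (n k : ℕ) (a b : List ℕ)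
    (ha : IsComposition a) (hb : IsComposition b)
    (hk1 : 1 ≤ k) (hkn : k ≤ n)
    (hsa : a.sum = n - k) (hsb : b.sum = n)
    (hT : topIndex n a b = 0) :
    Nat.card (meanderC n a b).ConnectedComponent = k ∧
    (∀ c : (meanderC n a b).ConnectedComponent,
      IsSegmentComp (meanderC n a b) c ∧ SigmaStable n (meanderC n a b) c ∧
      ∃! p : Fin (2 * n) × Fin (2 * n),
        (meanderC n a b).Adj p.1 p.2 ∧ p.1.val < n ∧ n ≤ p.2.val ∧
        (meanderC n a b).connectedComponentMk p.1 = c) ∧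
    (meanderC n a b).edgeSet.ncard = 2 * n - k :=
  frobenius_k_components_general n k a b hkn hsa hsb hT
end

section
/- Let F_{n,k} denote the set of Frobenius seaweed data (a|b) for sp_{2n} (up to swapping a and b) whose type-C meander graph has exactly k central arcs. For every n ≥ 1 and k ≥ 1 there is an injective map from F_{n,k} into F_{n+1,k+1}. -/
/-- A Frobenius seaweed datum for `sp_{2n}` whose meander graph has `k` central arcs:
one of the compositions sums to `n`, the other to `n - k`, and `T_n(a|b) = 0`. -/
def FrobDatum (n k : ℕ) (a b : List ℕ) : Prop :=
  IsComposition a ∧ IsComposition b ∧ 1 ≤ k ∧ k ≤ n ∧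
    ((a.sum = n - k ∧ b.sum = n) ∨ (b.sum = n - k ∧ a.sum = n)) ∧
    topIndex n a b = 0

/-- Frobenius seaweed data with `k` central arcs, up to swapping the two compositions. -/
def FSet (n k : ℕ) : Set (Sym2 (List ℕ)) :=
  {s | ∃ a b, s = s(a, b) ∧ FrobDatum n k a b}

/-- The number `F_{n,k}` of Frobenius seaweed data with `k` central arcs, up to swap. -/
noncomputable def Fcount (n k : ℕ) : ℕ := (FSet n k).ncard

/-!
The injection sends a datum `(a | b)` with `Σ a = n - k` and `Σ b = n` to `(a | b ++ [1])`.
In `Γ^C_{n+1}(a | b ++ [1])` the middle block of `ã` grows by two, which adds the central arc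
joining the two new middle vertices `n` and `n + 1`, while on the `b` side these vertices are
singleton blocks. So the new graph is `Γ^C_n(a | b)`, with a gap opened at `n`, plus one extra
edge that is a `σ`-stable segment on its own; the reflections are compatible with the gap.
Cycles and non-`σ`-stable segments therefore correspond bijectively and the index stays `0`.
The map is injective because `Σ a < n + 1` identifies which entry of the unordered pair received
the extra part.
-/

open Function SimpleGraph

def IsInvariantComp {V : Type*} (G : SimpleGraph V) (τ : V → V) (c : G.ConnectedComponent) :
    Prop :=
  ∀ v, G.connectedComponentMk v = c → G.connectedComponentMk (τ v) = c

lemma Relation.map_sup {α β : Type*} (r s : α → α → Prop) (f : α → β) :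
    Relation.Map (r ⊔ s) f f = Relation.Map r f f ⊔ Relation.Map s f f := by
  ext c d
  simp only [Relation.Map, Pi.sup_apply, sup_Prop_eq]
  grind

lemma Set.notMem_of_compl_eq_pair_left {α : Type*} {s : Set α} {x y : α} (h : sᶜ = {x, y}) :
    x ∉ s :=
  Set.notMem_of_mem_compl (h ▸ Set.mem_insert x {y})

lemma Set.notMem_of_compl_eq_pair_right {α : Type*} {s : Set α} {x y : α} (h : sᶜ = {x, y}) :
    y ∉ s :=
  Set.notMem_of_mem_compl (h ▸ Set.mem_insert_of_mem x rfl)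

lemma Relation.map_onFun_val {N M : ℕ} {R : ℕ → ℕ → Prop} (hR : ∀ i j, R i j → i < N ∧ j < N)
    (f : Fin N ↪ Fin M) (g : ℕ → ℕ) (hfg : ∀ u, (f u : ℕ) = g u) :
    (Relation.Map R g g on Fin.val) = Relation.Map (R on Fin.val) f f := by
  ext u v
  constructor
  · rintro ⟨i, j, hij, hi, hj⟩
    obtain ⟨hiN, hjN⟩ := hR i j hij
    exact ⟨⟨i, hiN⟩, ⟨j, hjN⟩, hij, Fin.ext (by rw [hfg, hi]), Fin.ext (by rw [hfg, hj])⟩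
  · rintro ⟨u', v', huv, rfl, rfl⟩
    exact ⟨u', v', huv, (hfg u').symm, (hfg v').symm⟩

namespace SimpleGraph

variable {V W : Type*}

lemma fromRel_sup (r s : V → V → Prop) : fromRel (r ⊔ s) = fromRel r ⊔ fromRel s := by
  ext u v
  simp only [fromRel_adj, sup_adj, Pi.sup_apply, sup_Prop_eq]
  tauto

lemma map_fromRel (f : V ↪ W) (r : V → V → Prop) :
    (fromRel r).map f = fromRel (Relation.Map r f f) := by
  ext u v
  simp only [map_adj, fromRel_adj, Relation.Map]
  constructor
  · rintro ⟨u', v', ⟨hne, h | h⟩, rfl, rfl⟩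
    · exact ⟨f.injective.ne hne, Or.inl ⟨u', v', h, rfl, rfl⟩⟩
    · exact ⟨f.injective.ne hne, Or.inr ⟨v', u', h, rfl, rfl⟩⟩
  · rintro ⟨hne, ⟨u', v', h, rfl, rfl⟩ | ⟨v', u', h, rfl, rfl⟩⟩
    · exact ⟨u', v', ⟨ne_of_apply_ne f hne, Or.inl h⟩, rfl, rfl⟩
    · exact ⟨u', v', ⟨ne_of_apply_ne f hne, Or.inr h⟩, rfl, rfl⟩

lemma fromRel_eq_edge (x y : V) : fromRel (fun u v => u = x ∧ v = y) = edge x y := by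
  ext u v
  rw [fromRel_adj, edge_adj]
  tauto

section MapSupEdge

variable {G : SimpleGraph V} {f : V ↪ W} {x y : W}

def mapSupEdgeHom (G : SimpleGraph V) (f : V ↪ W) (x y : W) : G →g G.map f ⊔ edge x y :=
  (Hom.ofLE le_sup_left).comp (Embedding.map f G).toHom

lemma map_sup_edge_adj_apply (hrange : (Set.range f)ᶜ = {x, y}) (u : V) (w : W) :
    (G.map f ⊔ edge x y).Adj (f u) w ↔ ∃ v, G.Adj u v ∧ f v = w := by
  have hx : f u ≠ x := fun h => Set.notMem_of_compl_eq_pair_left hrange ⟨u, h⟩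
  have hy : f u ≠ y := fun h => Set.notMem_of_compl_eq_pair_right hrange ⟨u, h⟩
  simp [sup_adj, edge_adj, hx, hy]

lemma map_sup_edge_neighborSet_apply (hrange : (Set.range f)ᶜ = {x, y}) (u : V) :
    (G.map f ⊔ edge x y).neighborSet (f u) = f '' G.neighborSet u := by
  ext w
  exact map_sup_edge_adj_apply hrange u w

lemma map_sup_edge_adj_of_mem_pair (hrange : (Set.range f)ᶜ = {x, y}) {v w : W}
    (hv : v = x ∨ v = y) (hvw : (G.map f ⊔ edge x y).Adj v w) : w = x ∨ w = y := by
  have hx := Set.notMem_of_compl_eq_pair_left hrange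
  have hy := Set.notMem_of_compl_eq_pair_right hrange
  rcases hvw with ⟨-, u, u', -, rfl, -⟩ | h
  · rcases hv with h | h <;> simp_all
  · rw [edge_adj] at h
    tauto

lemma map_sup_edge_reachable_apply_iff (hrange : (Set.range f)ᶜ = {x, y}) {u v : V} :
    (G.map f ⊔ edge x y).Reachable (f u) (f v) ↔ G.Reachable u v := by
  refine ⟨fun ⟨p⟩ => ?_, fun h => h.map (mapSupEdgeHom G f x y)⟩
  suffices ∀ {w w' : W} (p : (G.map f ⊔ edge x y).Walk w w') (u : V), f u = w → f v = w' →
      G.Reachable u v from this p u rfl rfl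
  intro w w' p
  induction p with
  | nil => rintro u rfl h; rw [f.injective h]
  | cons hadj _ ih =>
      rintro u rfl rfl
      obtain ⟨u', hu', rfl⟩ := (map_sup_edge_adj_apply hrange u _).mp hadj
      exact hu'.reachable.trans (ih u' rfl rfl)

lemma map_sup_edge_reachable_of_mem_pair (hrange : (Set.range f)ᶜ = {x, y}) {v w : W}
    (hv : v = x ∨ v = y) (h : (G.map f ⊔ edge x y).Reachable v w) : w = x ∨ w = y := by
  obtain ⟨p⟩ := h
  induction p with
  | nil => exact hv
  | cons hadj _ ih => exact ih (map_sup_edge_adj_of_mem_pair hrange hv hadj)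

lemma map_sup_edge_adj_left (hxy : x ≠ y) (hrange : (Set.range f)ᶜ = {x, y}) (w : W) :
    (G.map f ⊔ edge x y).Adj x w ↔ w = y := by
  have hx := Set.notMem_of_compl_eq_pair_left hrange
  rw [sup_adj, edge_adj]
  constructor
  · rintro (⟨-, u, u', -, rfl, -⟩ | ⟨⟨-, rfl⟩ | ⟨rfl, rfl⟩, hne⟩)
    · exact absurd ⟨u, rfl⟩ hx
    · rfl
    · exact absurd rfl hne
  · rintro rfl
    exact Or.inr ⟨Or.inl ⟨rfl, rfl⟩, hxy⟩

lemma connectedComponentMk_map_sup_edge_right (hxy : x ≠ y) (hrange : (Set.range f)ᶜ = {x, y}) :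
    (G.map f ⊔ edge x y).connectedComponentMk y = (G.map f ⊔ edge x y).connectedComponentMk x :=
  ConnectedComponent.sound ((map_sup_edge_adj_left hxy hrange y).mpr rfl).reachable.symm

local notation "Φ" => ConnectedComponent.map (mapSupEdgeHom G f x y)

lemma componentMap_map_sup_edge_injective (hrange : (Set.range f)ᶜ = {x, y}) : Injective Φ := by
  intro c d
  refine ConnectedComponent.ind₂ (fun u v h => ?_) c d
  exact ConnectedComponent.sound
    ((map_sup_edge_reachable_apply_iff hrange).mp (ConnectedComponent.exact h))

lemma exists_eq_apply_of_connectedComponentMk_eq_componentMap (hrange : (Set.range f)ᶜ = {x, y})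
    {w : W} {c : G.ConnectedComponent}
    (hw : (G.map f ⊔ edge x y).connectedComponentMk w = Φ c) :
    ∃ v, f v = w ∧ G.connectedComponentMk v = c := by
  induction c using ConnectedComponent.ind with | h u => ?_
  have hwu := ConnectedComponent.exact hw
  have hw_range : w ∈ Set.range f := by
    by_contra hw'
    rw [← Set.mem_compl_iff, hrange] at hw'
    rcases map_sup_edge_reachable_of_mem_pair hrange hw' hwu with h | h
    · exact Set.notMem_of_compl_eq_pair_left hrange ⟨u, h⟩
    · exact Set.notMem_of_compl_eq_pair_right hrange ⟨u, h⟩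
  obtain ⟨v, rfl⟩ := hw_range
  exact ⟨v, rfl, ConnectedComponent.sound ((map_sup_edge_reachable_apply_iff hrange).mp hwu)⟩

lemma exists_componentMap_eq (hxy : x ≠ y) (hrange : (Set.range f)ᶜ = {x, y})
    {c : (G.map f ⊔ edge x y).ConnectedComponent}
    (hc : c ≠ (G.map f ⊔ edge x y).connectedComponentMk x) : ∃ d, Φ d = c := by
  induction c using ConnectedComponent.ind with | h w => ?_
  by_cases hw : w ∈ Set.range f
  · obtain ⟨v, rfl⟩ := hw
    exact ⟨G.connectedComponentMk v, rfl⟩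
  · rw [← Set.mem_compl_iff, hrange] at hw
    rcases hw with rfl | rfl
    · exact absurd rfl hc
    · exact absurd (connectedComponentMk_map_sup_edge_right hxy hrange) hc

lemma ncard_setOf_componentMap (hxy : x ≠ y) (hrange : (Set.range f)ᶜ = {x, y})
    {P : (G.map f ⊔ edge x y).ConnectedComponent → Prop} {Q : G.ConnectedComponent → Prop}
    (hPQ : ∀ c, P (Φ c) ↔ Q c) (hPx : ¬ P ((G.map f ⊔ edge x y).connectedComponentMk x)) :
    {c | P c}.ncard = {c | Q c}.ncard := by
  have himage : {c | P c} = Φ '' {c | Q c} := by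
    ext c
    refine ⟨fun hc => ?_, fun ⟨d, hd, hdc⟩ => hdc ▸ (hPQ d).mpr hd⟩
    obtain ⟨d, rfl⟩ := exists_componentMap_eq hxy hrange (c := c) (by rintro rfl; exact hPx hc)
    exact ⟨d, (hPQ d).mp hc, rfl⟩
  rw [himage, Set.ncard_image_of_injective _ (componentMap_map_sup_edge_injective hrange)]

lemma isCycleComp_componentMap_iff (hrange : (Set.range f)ᶜ = {x, y}) (c : G.ConnectedComponent) :
    IsCycleComp (G.map f ⊔ edge x y) (Φ c) ↔ IsCycleComp G c := by
  have hdeg (v : V) : ((G.map f ⊔ edge x y).neighborSet (f v)).ncard = (G.neighborSet v).ncard := by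
    rw [map_sup_edge_neighborSet_apply hrange, Set.ncard_image_of_injective _ f.injective]
  constructor
  · intro h v hv
    rw [← hdeg]
    exact h (f v) (hv ▸ rfl)
  · intro h w hw
    obtain ⟨v, rfl, hv⟩ := exists_eq_apply_of_connectedComponentMk_eq_componentMap hrange hw
    rw [hdeg]
    exact h v hv

lemma not_isCycleComp_connectedComponentMk_left (hxy : x ≠ y) (hrange : (Set.range f)ᶜ = {x, y}) :
    ¬ IsCycleComp (G.map f ⊔ edge x y) ((G.map f ⊔ edge x y).connectedComponentMk x) := by
  intro h
  have hx : (G.map f ⊔ edge x y).neighborSet x = {y} := Set.ext (map_sup_edge_adj_left hxy hrange)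
  have := h x rfl
  rw [hx, Set.ncard_singleton] at this
  omega

variable {σ : V → V} {σ' : W → W}

lemma isInvariantComp_componentMap_iff (hrange : (Set.range f)ᶜ = {x, y})
    (hσ : ∀ v, σ' (f v) = f (σ v)) (c : G.ConnectedComponent) :
    IsInvariantComp (G.map f ⊔ edge x y) σ' (Φ c) ↔ IsInvariantComp G σ c := by
  constructor
  · intro h v hv
    apply componentMap_map_sup_edge_injective hrange
    have := h (f v) (hv ▸ rfl)
    rwa [hσ] at this
  · intro h w hw
    obtain ⟨v, rfl, hv⟩ := exists_eq_apply_of_connectedComponentMk_eq_componentMap hrange hw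
    rw [hσ]
    exact congrArg Φ (h v hv)

lemma isInvariantComp_connectedComponentMk_left (hxy : x ≠ y) (hrange : (Set.range f)ᶜ = {x, y})
    (hσx : σ' x = y) (hσy : σ' y = x) :
    IsInvariantComp (G.map f ⊔ edge x y) σ' ((G.map f ⊔ edge x y).connectedComponentMk x) := by
  intro v hv
  rcases map_sup_edge_reachable_of_mem_pair hrange (Or.inl rfl) (ConnectedComponent.exact hv.symm)
    with rfl | rfl
  · rw [hσx, connectedComponentMk_map_sup_edge_right hxy hrange]
  · rw [hσy]

theorem numCycles_map_sup_edge (hxy : x ≠ y) (hrange : (Set.range f)ᶜ = {x, y}) :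
    numCycles (G.map f ⊔ edge x y) = numCycles G :=
  ncard_setOf_componentMap hxy hrange (isCycleComp_componentMap_iff hrange)
    (not_isCycleComp_connectedComponentMk_left hxy hrange)

theorem ncard_nonInvariant_segments_map_sup_edge (hxy : x ≠ y)
    (hrange : (Set.range f)ᶜ = {x, y}) (hσ : ∀ v, σ' (f v) = f (σ v)) (hσx : σ' x = y)
    (hσy : σ' y = x) :
    {c | IsSegmentComp (G.map f ⊔ edge x y) c ∧ ¬ IsInvariantComp (G.map f ⊔ edge x y) σ' c}.ncard =
      {c | IsSegmentComp G c ∧ ¬ IsInvariantComp G σ c}.ncard :=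
  ncard_setOf_componentMap hxy hrange
    (fun c => and_congr (not_congr (isCycleComp_componentMap_iff hrange c))
      (not_congr (isInvariantComp_componentMap_iff hrange hσ c)))
    (fun h => h.2 (isInvariantComp_connectedComponentMk_left hxy hrange hσx hσy))

end MapSupEdge

end SimpleGraph

lemma arcs_cons (m : ℕ) (l : List ℕ) (o : ℕ) :
    arcs (m :: l) o = inBlockArc o m ⊔ arcs l (o + m) :=
  rfl

lemma arcs_append_s7 (l₁ l₂ : List ℕ) (o : ℕ) :
    arcs (l₁ ++ l₂) o = arcs l₁ o ⊔ arcs l₂ (o + l₁.sum) := by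
  induction l₁ generalizing o with
  | nil => ext; simp [arcs]
  | cons m l ih =>
      rw [List.cons_append, arcs_cons, arcs_cons, ih, List.sum_cons, add_assoc, sup_assoc]

lemma inBlockArc_eq_bot_of_le_one {m : ℕ} (hm : m ≤ 1) (o : ℕ) : inBlockArc o m = ⊥ := by
  ext i j
  simp only [inBlockArc, Pi.bot_apply, Prop.bot_eq_false, iff_false]
  omega

lemma arcs_eq_bot_of_forall_le_one {l : List ℕ} (h : ∀ m ∈ l, m ≤ 1) (o : ℕ) : arcs l o = ⊥ := by
  induction l generalizing o with
  | nil => rfl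
  | cons m l ih =>
      rw [arcs_cons, inBlockArc_eq_bot_of_le_one (h m List.mem_cons_self),
        ih (fun m hm => h m (List.mem_cons_of_mem _ hm)), bot_sup_eq]

lemma arcs_singleton (m o : ℕ) : arcs [m] o = inBlockArc o m := by
  ext; simp [arcs]

lemma arcs_filter_ne_zero_s7 (l : List ℕ) (o : ℕ) : arcs (l.filter (· != 0)) o = arcs l o := by
  induction l generalizing o with
  | nil => rfl
  | cons m l ih =>
      rcases Nat.eq_zero_or_pos m with rfl | hm
      · simp [arcs_cons, ih, inBlockArc_eq_bot_of_le_one]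
      · rw [List.filter_cons_of_pos (by simpa using hm.ne'), arcs_cons, arcs_cons, ih]

lemma le_and_lt_and_lt_of_arcs {l : List ℕ} {o i j : ℕ} (h : arcs l o i j) :
    o ≤ i ∧ i < j ∧ j < o + l.sum := by
  induction l generalizing o with
  | nil => exact h.elim
  | cons m l ih =>
      rcases h with ⟨t, ht, rfl, rfl⟩ | h
      · simp only [List.sum_cons]; omega
      · have := ih h; simp only [List.sum_cons]; omega

lemma arcs_add_add_add {l : List ℕ} {o c i j : ℕ} :
    arcs l (o + c) (i + c) (j + c) ↔ arcs l o i j := by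
  induction l generalizing o with
  | nil => rfl
  | cons m l ih =>
      simp only [arcs_cons, Pi.sup_apply, sup_Prop_eq, add_right_comm o c m, ih, inBlockArc]
      grind

def insertTwo (p v : ℕ) : ℕ := if v < p then v else v + 2

lemma insertTwo_injective (p : ℕ) : Injective (insertTwo p) := by
  intro u v h
  simp only [insertTwo] at h
  split_ifs at h <;> omega

lemma map_arcs_insertTwo_of_le {l : List ℕ} {o p : ℕ} (h : o + l.sum ≤ p) :
    Relation.Map (arcs l o) (insertTwo p) (insertTwo p) = arcs l o := by
  ext i j
  constructor
  · rintro ⟨i, j, hij, rfl, rfl⟩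
    have := le_and_lt_and_lt_of_arcs hij
    rwa [insertTwo, insertTwo, if_pos (by omega), if_pos (by omega)]
  · intro hij
    have := le_and_lt_and_lt_of_arcs hij
    exact ⟨i, j, hij, if_pos (by omega), if_pos (by omega)⟩

lemma map_arcs_insertTwo_of_ge {l : List ℕ} {o p : ℕ} (h : p ≤ o) :
    Relation.Map (arcs l o) (insertTwo p) (insertTwo p) = arcs l (o + 2) := by
  ext i j
  constructor
  · rintro ⟨i, j, hij, rfl, rfl⟩
    have := le_and_lt_and_lt_of_arcs hij
    rwa [insertTwo, insertTwo, if_neg (by omega), if_neg (by omega), arcs_add_add_add]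
  · intro hij
    have := le_and_lt_and_lt_of_arcs hij
    refine ⟨i - 2, j - 2, ?_, ?_, ?_⟩
    · rwa [← arcs_add_add_add (c := 2), Nat.sub_add_cancel (by omega),
        Nat.sub_add_cancel (by omega)]
    · rw [insertTwo, if_neg (by omega)]; omega
    · rw [insertTwo, if_neg (by omega)]; omega

lemma map_inBlockArc_insertTwo_sup (o d : ℕ) :
    Relation.Map (inBlockArc o (2 * d)) (insertTwo (o + d)) (insertTwo (o + d)) ⊔
        (fun i j => i = o + d ∧ j = o + d + 1) = inBlockArc o (2 * (d + 1)) := by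
  ext i j
  simp only [Pi.sup_apply, sup_Prop_eq, Relation.Map, inBlockArc, insertTwo]
  constructor
  · rintro (⟨_, _, ⟨t, ht, rfl, rfl⟩, rfl, rfl⟩ | ⟨rfl, rfl⟩)
    · refine ⟨t, by omega, ?_, ?_⟩ <;> split_ifs <;> omega
    · exact ⟨d, by omega, rfl, by omega⟩
  · rintro ⟨t, ht, rfl, rfl⟩
    rcases lt_or_eq_of_le (show t ≤ d by omega) with htd | rfl
    · refine Or.inl ⟨_, _, ⟨t, by omega, rfl, rfl⟩, ?_, ?_⟩ <;> split_ifs <;> omega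
    · exact Or.inr ⟨rfl, by omega⟩

lemma arcs_tildeComp_s7 (n : ℕ) (a : List ℕ) (o : ℕ) :
    arcs (tildeComp n a) o = arcs (a ++ [2 * (n - a.sum)] ++ a.reverse) o :=
  arcs_filter_ne_zero_s7 _ o

lemma arcs_tildeComp_succ {n : ℕ} {a : List ℕ} (ha : a.sum ≤ n) :
    arcs (tildeComp (n + 1) a) 0 =
      Relation.Map (arcs (tildeComp n a) 0) (insertTwo n) (insertTwo n) ⊔
        (fun i j => i = n ∧ j = n + 1) := by
  obtain ⟨d, rfl⟩ : ∃ d, n = a.sum + d := ⟨n - a.sum, by omega⟩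
  rw [arcs_tildeComp_s7, arcs_tildeComp_s7, show a.sum + d + 1 - a.sum = d + 1 by omega,
    show a.sum + d - a.sum = d by omega]
  simp only [arcs_append_s7, arcs_singleton, Relation.map_sup, List.sum_append, List.sum_singleton,
    zero_add]
  rw [map_arcs_insertTwo_of_le (l := a) (o := 0) (by omega), map_arcs_insertTwo_of_ge (by omega),
    ← map_inBlockArc_insertTwo_sup, show a.sum + 2 * d + 2 = a.sum + 2 * (d + 1) by ring]
  ac_rfl

lemma arcs_tildeComp_append_one {n : ℕ} {b : List ℕ} (hb : b.sum = n) :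
    arcs (tildeComp (n + 1) (b ++ [1])) 0 =
      Relation.Map (arcs (tildeComp n b) 0) (insertTwo n) (insertTwo n) := by
  have hb' : (b ++ [1]).sum = n + 1 := by simp [hb]
  rw [arcs_tildeComp_s7, arcs_tildeComp_s7, hb', hb, Nat.sub_self, Nat.sub_self, List.reverse_append]
  simp only [arcs_append_s7, List.sum_append, List.sum_cons, List.sum_nil, hb,
    arcs_eq_bot_of_forall_le_one (l := [1]) (by simp),
    arcs_eq_bot_of_forall_le_one (l := [0]) (by simp),
    List.reverse_singleton, sup_bot_eq, bot_sup_eq, Relation.map_sup, zero_add, add_zero, mul_zero]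
  rw [map_arcs_insertTwo_of_le (l := b) (o := 0) (by omega), map_arcs_insertTwo_of_ge le_rfl]

def meanderRel (n : ℕ) (a b : List ℕ) : ℕ → ℕ → Prop :=
  arcs (tildeComp n a) 0 ⊔ arcs (tildeComp n b) 0

lemma meanderC_eq_fromRel (n : ℕ) (a b : List ℕ) :
    meanderC n a b = fromRel (meanderRel n a b on Fin.val) := by
  ext u v
  simp only [meanderC, meanderA, fromRel_adj, onFun, meanderRel, Pi.sup_apply, sup_Prop_eq]
  rw [Ne, Fin.ext_iff]
  tauto

lemma lt_of_meanderRel {n : ℕ} {a b : List ℕ} (ha : a.sum ≤ n) (hb : b.sum ≤ n) {i j : ℕ}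
    (h : meanderRel n a b i j) : i < 2 * n ∧ j < 2 * n := by
  have hsum {c : List ℕ} (hc : c.sum ≤ n) : (c ++ [2 * (n - c.sum)] ++ c.reverse).sum = 2 * n := by
    simp only [List.sum_append, List.sum_singleton, List.sum_reverse]
    omega
  rcases h with h | h <;> rw [arcs_tildeComp_s7] at h <;>
    have := le_and_lt_and_lt_of_arcs h
  · rw [hsum ha] at this; omega
  · rw [hsum hb] at this; omega

lemma meanderRel_succ {n : ℕ} {a b : List ℕ} (ha : a.sum ≤ n) (hb : b.sum = n) :
    meanderRel (n + 1) a (b ++ [1]) =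
      Relation.Map (meanderRel n a b) (insertTwo n) (insertTwo n) ⊔
        (fun i j => i = n ∧ j = n + 1) := by
  rw [meanderRel, meanderRel, arcs_tildeComp_succ ha, arcs_tildeComp_append_one hb,
    Relation.map_sup]
  ac_rfl

def insertTwoEmb (n : ℕ) : Fin (2 * n) ↪ Fin (2 * (n + 1)) where
  toFun v := ⟨insertTwo n v, by have := v.isLt; unfold insertTwo; split_ifs <;> omega⟩
  inj' u v h := Fin.ext (insertTwo_injective n (congrArg Fin.val h))

lemma meanderC_succ {n : ℕ} {a b : List ℕ} (ha : a.sum ≤ n) (hb : b.sum = n) :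
    meanderC (n + 1) a (b ++ [1]) =
      (meanderC n a b).map (insertTwoEmb n) ⊔ edge ⟨n, by omega⟩ ⟨n + 1, by omega⟩ := by
  rw [meanderC_eq_fromRel, meanderC_eq_fromRel, map_fromRel,
    ← Relation.map_onFun_val (fun i j => lt_of_meanderRel ha hb.le) _ (insertTwo n) (fun _ => rfl),
    ← fromRel_eq_edge, ← fromRel_sup, meanderRel_succ ha hb]
  congr 1
  ext u v
  simp only [onFun, Pi.sup_apply, sup_Prop_eq, Fin.ext_iff]

lemma compl_range_insertTwoEmb (n : ℕ) :
    (Set.range (insertTwoEmb n))ᶜ = {⟨n, by omega⟩, ⟨n + 1, by omega⟩} := by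
  ext ⟨w, hw⟩
  simp only [Set.mem_compl_iff, Set.mem_range, Set.mem_insert_iff, Set.mem_singleton_iff,
    Fin.ext_iff, insertTwoEmb, Embedding.coeFn_mk, insertTwo, not_exists]
  constructor
  · intro h
    by_contra! hne
    rcases lt_or_ge w n with hwn | hwn
    · exact h ⟨w, by omega⟩ (if_pos hwn)
    · exact h ⟨w - 2, by omega⟩ (by dsimp only; rw [if_neg (by omega)]; omega)
  · rintro (rfl | rfl) ⟨u, hu⟩ <;> split_ifs <;> omega

lemma sigmaRefl_insertTwoEmb (n : ℕ) (u : Fin (2 * n)) :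
    sigmaRefl (n + 1) (insertTwoEmb n u) = insertTwoEmb n (sigmaRefl n u) := by
  have := u.isLt
  ext
  simp only [sigmaRefl, insertTwoEmb, Embedding.coeFn_mk, insertTwo]
  split_ifs <;> omega

lemma numNonStableSegments_eq (n : ℕ) (a b : List ℕ) :
    numNonStableSegments n a b = {c | IsSegmentComp (meanderC n a b) c ∧
      ¬ IsInvariantComp (meanderC n a b) (sigmaRefl n) c}.ncard :=
  rfl

theorem topIndex_append_one {n : ℕ} {a b : List ℕ} (ha : a.sum ≤ n) (hb : b.sum = n) :
    topIndex (n + 1) a (b ++ [1]) = topIndex n a b := by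
  have hxy : (⟨n, by omega⟩ : Fin (2 * (n + 1))) ≠ ⟨n + 1, by omega⟩ := by simp
  rw [topIndex, topIndex, numNonStableSegments_eq, numNonStableSegments_eq, meanderC_succ ha hb,
    numCycles_map_sup_edge hxy (compl_range_insertTwoEmb n),
    ncard_nonInvariant_segments_map_sup_edge hxy (compl_range_insertTwoEmb n)
      (sigmaRefl_insertTwoEmb n) (by ext; simp [sigmaRefl]; omega)
      (by ext; simp [sigmaRefl]; omega)]

lemma meanderC_comm (n : ℕ) (a b : List ℕ) : meanderC n a b = meanderC n b a := by
  rw [meanderC_eq_fromRel, meanderC_eq_fromRel, meanderRel, meanderRel, sup_comm]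

lemma topIndex_comm (n : ℕ) (a b : List ℕ) : topIndex n a b = topIndex n b a := by
  unfold topIndex numNonStableSegments
  rw [meanderC_comm]

namespace FrobDatum

variable {n k : ℕ} {a b : List ℕ}

lemma symm (h : FrobDatum n k a b) : FrobDatum n k b a := by
  obtain ⟨ha, hb, hk, hkn, hsum, htop⟩ := h
  exact ⟨hb, ha, hk, hkn, hsum.symm, topIndex_comm n b a ▸ htop⟩

lemma append_one (h : FrobDatum n k a b) (ha : a.sum = n - k) (hb : b.sum = n) :
    FrobDatum (n + 1) (k + 1) a (b ++ [1]) := by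
  obtain ⟨hca, hcb, hk, hkn, -, htop⟩ := h
  refine ⟨hca, ?_, by omega, by omega, Or.inl ⟨by omega, by simp [hb]⟩, ?_⟩
  · simpa [IsComposition, or_imp, forall_and] using hcb
  · rw [topIndex_append_one (by omega) hb, htop]

end FrobDatum

lemma exists_frobDatum_of_mem_FSet {n k : ℕ} {s : Sym2 (List ℕ)} (hs : s ∈ FSet n k) :
    ∃ a b, s = s(a, b) ∧ FrobDatum n k a b ∧ a.sum = n - k ∧ b.sum = n := by
  obtain ⟨a, b, rfl, h⟩ := hs
  rcases h.2.2.2.2.1 with ⟨ha, hb⟩ | ⟨hb, ha⟩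
  · exact ⟨a, b, rfl, h, ha, hb⟩
  · exact ⟨b, a, Sym2.eq_swap, h.symm, hb, ha⟩

theorem FSet_injection_general (n k : ℕ) :
    ∃ f : FSet n k → FSet (n + 1) (k + 1), Function.Injective f := by
  choose a b hs hd ha hb using fun s : FSet n k => exists_frobDatum_of_mem_FSet s.2
  refine ⟨fun s => ⟨s(a s, b s ++ [1]), a s, b s ++ [1], rfl, (hd s).append_one (ha s) (hb s)⟩, ?_⟩
  intro s t hst
  rcases Sym2.eq_iff.mp (congrArg Subtype.val hst) with ⟨has, hbs⟩ | ⟨hab, -⟩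
  · rw [Subtype.ext_iff, hs s, hs t, has, List.append_cancel_right hbs]
  · have := congrArg List.sum hab
    simp only [List.sum_append, List.sum_singleton, ha s, hb t] at this
    omega

/-- For every `n ≥ 1` and `k ≥ 1` there is an injection `F_{n,k} ↪ F_{n+1,k+1}`. -/
theorem FSet_injection (n k : ℕ) (hn : 1 ≤ n) (hk : 1 ≤ k) :
    ∃ f : FSet n k → FSet (n + 1) (k + 1), Function.Injective f :=
  FSet_injection_general n k
end
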